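/- For every t ∈ ℝ, the limit as s → 0 (s ≠ 0) of G^B_{n_y τ_y τ_y}(γ(t), γ(t+s)) equals −κ(t)/(8π), where for x ≠ γ(s′) one defines G^B_{n_y τ_y τ_y}(x, γ(s′)) = (1/(2π))·(r·n(s′))·(r·τ(s′))²/‖r‖⁴ − (1/(4π))·(r·n(s′))/‖r‖² with r = x − γ(s′); this function is the mixed third directional derivative of y ↦ G^B(x,y) once in direction n(s′) and twice in direction τ(s′). -/

import Mathlib

open Real Filter Topology MeasureTheory

noncomputable section

/-- Euclidean dot product on `ℝ × ℝ`. -/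
def dot2 (v w : ℝ × ℝ) : ℝ := v.1 * w.1 + v.2 * w.2

/-- Unit tangent vector `τ(s) = γ′(s)`. -/
def tang (γ : ℝ → ℝ × ℝ) (s : ℝ) : ℝ × ℝ := deriv γ s

/-- Unit normal vector `n(s) = (τ₂(s), −τ₁(s))`. -/
def nor (γ : ℝ → ℝ × ℝ) (s : ℝ) : ℝ × ℝ := ((deriv γ s).2, -(deriv γ s).1)

/-- Signed curvature `κ(s) = −γ″(s)·n(s)`. -/
def curv (γ : ℝ → ℝ × ℝ) (s : ℝ) : ℝ := -(dot2 (deriv (deriv γ) s) (nor γ s))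

/-- Explicit formula for `G^B_{n_y τ_y τ_y}(x, γ(s'))`, with `r = x − γ(s')`. -/
def GB_ny_ty_ty (γ : ℝ → ℝ × ℝ) (x : ℝ × ℝ) (s' : ℝ) : ℝ :=
  1 / (2 * π) * dot2 (x - γ s') (nor γ s') * (dot2 (x - γ s') (tang γ s')) ^ 2
      / (dot2 (x - γ s') (x - γ s')) ^ 2
    - 1 / (4 * π) * dot2 (x - γ s') (nor γ s') / dot2 (x - γ s') (x - γ s')

/-! Write `r(s) = γ t - γ (t + s)`. The kernel `gbKernel (r·n) (r·τ) (r·r)` is unchanged when its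
three arguments are divided by `s²`, `s` and `s²`, and the rescaled quantities converge: `r / s → -τ(t)`
gives `r·τ / s → -1` and `r·r / s² → 1`. For `r·n / s²` use l'Hôpital: since `τ ⟂ n`, the derivative
of `r·n(t + s)` is `r·n'(t + s)`, and `r·n' / (2s) → -τ·n' / 2 = -κ/2`. Hence the limit is
`(1/(2π))(-κ/2) - (1/(4π))(-κ/2) = -κ/(8π)`. -/

lemma dot2_smul_left (c : ℝ) (v w : ℝ × ℝ) : dot2 (c • v) w = c * dot2 v w := by
  simp only [dot2, Prod.smul_fst, Prod.smul_snd, smul_eq_mul]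
  ring

lemma dot2_smul_right (c : ℝ) (v w : ℝ × ℝ) : dot2 v (c • w) = c * dot2 v w := by
  simp only [dot2, Prod.smul_fst, Prod.smul_snd, smul_eq_mul]
  ring

lemma dot2_neg_left (v w : ℝ × ℝ) : dot2 (-v) w = -dot2 v w := by
  simp only [dot2, Prod.fst_neg, Prod.snd_neg]
  ring

lemma dot2_neg_right (v w : ℝ × ℝ) : dot2 v (-w) = -dot2 v w := by
  simp only [dot2, Prod.fst_neg, Prod.snd_neg]
  ring

lemma continuous_dot2 : Continuous fun p : (ℝ × ℝ) × (ℝ × ℝ) => dot2 p.1 p.2 := by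
  unfold dot2
  fun_prop

lemma Filter.Tendsto.dot2 {α : Type*} {l : Filter α} {f g : α → ℝ × ℝ} {v w : ℝ × ℝ}
    (hf : Tendsto f l (𝓝 v)) (hg : Tendsto g l (𝓝 w)) :
    Tendsto (fun x => dot2 (f x) (g x)) l (𝓝 (dot2 v w)) :=
  (continuous_dot2.tendsto (v, w)).comp (hf.prodMk_nhds hg)

lemma HasDerivAt.fst {f : ℝ → ℝ × ℝ} {f' : ℝ × ℝ} {x : ℝ} (hf : HasDerivAt f f' x) :
    HasDerivAt (fun y => (f y).1) f'.1 x :=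
  (ContinuousLinearMap.fst ℝ ℝ ℝ).hasFDerivAt.comp_hasDerivAt x hf

lemma HasDerivAt.snd {f : ℝ → ℝ × ℝ} {f' : ℝ × ℝ} {x : ℝ} (hf : HasDerivAt f f' x) :
    HasDerivAt (fun y => (f y).2) f'.2 x :=
  (ContinuousLinearMap.snd ℝ ℝ ℝ).hasFDerivAt.comp_hasDerivAt x hf

lemma HasDerivAt.dot2 {f g : ℝ → ℝ × ℝ} {f' g' : ℝ × ℝ} {x : ℝ}
    (hf : HasDerivAt f f' x) (hg : HasDerivAt g g' x) :
    HasDerivAt (fun y => dot2 (f y) (g y)) (dot2 f' (g x) + dot2 (f x) g') x := by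
  refine ((hf.fst.mul hg.fst).add (hf.snd.mul hg.snd)).congr_deriv ?_
  simp only [_root_.dot2]
  ring

def rot (v : ℝ × ℝ) : ℝ × ℝ := (v.2, -v.1)

@[fun_prop]
lemma continuous_rot : Continuous rot := by
  unfold rot
  fun_prop

lemma dot2_rot_self (v : ℝ × ℝ) : dot2 v (rot v) = 0 := by
  simp only [dot2, rot]
  ring

lemma HasDerivAt.rot {f : ℝ → ℝ × ℝ} {f' : ℝ × ℝ} {x : ℝ} (hf : HasDerivAt f f' x) :
    HasDerivAt (fun y => rot (f y)) (rot f') x :=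
  hf.snd.prodMk hf.fst.neg

lemma nor_eq_rot_deriv (γ : ℝ → ℝ × ℝ) (s : ℝ) : nor γ s = rot (deriv γ s) := rfl

lemma curv_eq_dot2_rot (γ : ℝ → ℝ × ℝ) (s : ℝ) :
    curv γ s = dot2 (deriv γ s) (rot (deriv (deriv γ) s)) := by
  simp only [curv, nor, dot2, rot]
  ring

lemma tendsto_inv_smul_chord {E : Type*} [NormedAddCommGroup E] [NormedSpace ℝ E] {γ : ℝ → E}
    {t : ℝ} (hγ : DifferentiableAt ℝ γ t) :
    Tendsto (fun s : ℝ => s⁻¹ • (γ t - γ (t + s))) (𝓝[≠] 0) (𝓝 (-deriv γ t)) := by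
  refine hγ.hasDerivAt.tendsto_slope_zero.neg.congr fun s => ?_
  rw [← smul_neg, neg_sub]

lemma ContinuousAt.tendsto_comp_const_add_nhdsNE {X : Type*} [TopologicalSpace X] {f : ℝ → X}
    {t : ℝ} (hf : ContinuousAt f t) :
    Tendsto (fun s => f (t + s)) (𝓝[≠] 0) (𝓝 (f t)) :=
  (hf.tendsto.comp ((continuous_const_add t).tendsto' 0 t (add_zero t))).mono_left
    nhdsWithin_le_nhds

section Chord

variable {γ : ℝ → ℝ × ℝ} {t : ℝ}

lemma tendsto_dot2_chord_div (hγ : DifferentiableAt ℝ γ t) {g : ℝ → ℝ × ℝ} {w : ℝ × ℝ}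
    (hg : Tendsto g (𝓝[≠] 0) (𝓝 w)) :
    Tendsto (fun s => dot2 (γ t - γ (t + s)) (g s) / s) (𝓝[≠] 0)
      (𝓝 (-dot2 (deriv γ t) w)) := by
  rw [← dot2_neg_left]
  refine ((tendsto_inv_smul_chord hγ).dot2 hg).congr fun s => ?_
  rw [dot2_smul_left, inv_mul_eq_div]

lemma tendsto_dot2_chord_self_div_sq (hγ : DifferentiableAt ℝ γ t) :
    Tendsto (fun s => dot2 (γ t - γ (t + s)) (γ t - γ (t + s)) / s ^ 2) (𝓝[≠] 0)
      (𝓝 (dot2 (deriv γ t) (deriv γ t))) := by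
  have h := tendsto_dot2_chord_div hγ (tendsto_inv_smul_chord hγ)
  rw [dot2_neg_right, neg_neg] at h
  refine h.congr fun s => ?_
  rw [dot2_smul_right]
  ring

lemma tendsto_dot2_chord_nor_div_sq (hγ : ContDiff ℝ 2 γ) :
    Tendsto (fun s => dot2 (γ t - γ (t + s)) (nor γ (t + s)) / s ^ 2) (𝓝[≠] 0)
      (𝓝 (-curv γ t / 2)) := by
  have hdiff : Differentiable ℝ γ := hγ.differentiable (by norm_num)
  have hdiff' : Differentiable ℝ (deriv γ) := hγ.differentiable_deriv_two
  have hcont'' : Continuous (deriv (deriv γ)) := by fun_prop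
  have hchord (s : ℝ) : HasDerivAt (fun s => γ t - γ (t + s)) (-deriv γ (t + s)) s :=
    ((hdiff (t + s)).hasDerivAt.comp_const_add t s).const_sub (γ t)
  have hnor (s : ℝ) : HasDerivAt (fun s => nor γ (t + s)) (rot (deriv (deriv γ) (t + s))) s :=
    ((hdiff' (t + s)).hasDerivAt.comp_const_add t s).rot
  -- the tangential part of the derivative vanishes since `τ ⟂ n`
  have hnum (s : ℝ) : HasDerivAt (fun s => dot2 (γ t - γ (t + s)) (nor γ (t + s)))
      (dot2 (γ t - γ (t + s)) (rot (deriv (deriv γ) (t + s)))) s :=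
    ((hchord s).dot2 (hnor s)).congr_deriv <| by
      rw [dot2_neg_left, nor_eq_rot_deriv, dot2_rot_self, neg_zero, zero_add]
  have hsq (s : ℝ) : HasDerivAt (fun s : ℝ => s ^ 2) (2 * s) s := by
    simpa using hasDerivAt_pow 2 s
  refine HasDerivAt.lhopital_zero_nhdsNE (.of_forall hnum) (.of_forall hsq) ?_ ?_ ?_ ?_
  · filter_upwards [self_mem_nhdsWithin] with s hs using mul_ne_zero two_ne_zero hs
  · have h := ((hnum 0).continuousAt.tendsto).mono_left (nhdsWithin_le_nhds (s := {0}ᶜ))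
    simpa [dot2] using h
  · have h := ((hsq 0).continuousAt.tendsto).mono_left (nhdsWithin_le_nhds (s := {0}ᶜ))
    simpa using h
  · have hrot : Tendsto (fun s => rot (deriv (deriv γ) (t + s))) (𝓝[≠] 0)
        (𝓝 (rot (deriv (deriv γ) t))) :=
      (continuous_rot.comp hcont'').continuousAt.tendsto_comp_const_add_nhdsNE
    have h := (tendsto_dot2_chord_div (hdiff t) hrot).const_mul (1 / 2)
    rw [← curv_eq_dot2_rot, one_div_mul_eq_div] at h
    refine h.congr fun s => ?_
    ring

end Chord

def gbKernel (a b c : ℝ) : ℝ := 1 / (2 * π) * a * b ^ 2 / c ^ 2 - 1 / (4 * π) * a / c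

lemma GB_ny_ty_ty_eq_gbKernel (γ : ℝ → ℝ × ℝ) (x : ℝ × ℝ) (s : ℝ) :
    GB_ny_ty_ty γ x s = gbKernel (dot2 (x - γ s) (nor γ s)) (dot2 (x - γ s) (tang γ s))
      (dot2 (x - γ s) (x - γ s)) := rfl

lemma gbKernel_div_sq (a b c : ℝ) {s : ℝ} (hs : s ≠ 0) :
    gbKernel (a / s ^ 2) (b / s) (c / s ^ 2) = gbKernel a b c := by
  unfold gbKernel
  rcases eq_or_ne c 0 with rfl | hc
  · simp
  · field_simp

lemma Filter.Tendsto.gbKernel {α : Type*} {l : Filter α} {f g h : α → ℝ} {a b c : ℝ}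
    (hf : Tendsto f l (𝓝 a)) (hg : Tendsto g l (𝓝 b)) (hh : Tendsto h l (𝓝 c)) (hc : c ≠ 0) :
    Tendsto (fun x => gbKernel (f x) (g x) (h x)) l (𝓝 (gbKernel a b c)) :=
  (((tendsto_const_nhds.mul hf).mul (hg.pow 2)).div (hh.pow 2) (pow_ne_zero 2 hc)).sub
    ((tendsto_const_nhds.mul hf).div hh hc)

theorem stmt1_general (γ : ℝ → ℝ × ℝ)
    (hγ : ContDiff ℝ (⊤ : ℕ∞) γ)
    (harc : ∀ s, dot2 (deriv γ s) (deriv γ s) = 1)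
    (t : ℝ) :
    Tendsto (fun s : ℝ => GB_ny_ty_ty γ (γ t) (t + s)) (𝓝[≠] (0 : ℝ))
      (𝓝 (-(curv γ t) / (8 * π))) := by
  have hγ₂ : ContDiff ℝ 2 γ := hγ.of_le (WithTop.coe_le_coe.mpr le_top)
  have hγ₁ : DifferentiableAt ℝ γ t := hγ₂.differentiable (by norm_num) t
  have hn := tendsto_dot2_chord_nor_div_sq (t := t) hγ₂
  have hτ := tendsto_dot2_chord_div hγ₁
    ((hγ₂.continuous_deriv (by norm_num)).continuousAt (x := t)).tendsto_comp_const_add_nhdsNE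
  have hr := tendsto_dot2_chord_self_div_sq hγ₁
  rw [harc] at hτ hr
  have hval : gbKernel (-curv γ t / 2) (-1) 1 = -curv γ t / (8 * π) := by
    unfold gbKernel
    field_simp
    ring
  refine hval ▸ (hn.gbKernel hτ hr one_ne_zero).congr' ?_
  filter_upwards [self_mem_nhdsWithin] with s hs
  rw [GB_ny_ty_ty_eq_gbKernel]
  exact gbKernel_div_sq _ _ _ hs

theorem stmt1 (L : ℝ) (hL : 0 < L) (γ : ℝ → ℝ × ℝ)
    (hγ : ContDiff ℝ (⊤ : ℕ∞) γ)
    (hper : ∀ s, γ (s + L) = γ s)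
    (hinj : Set.InjOn γ (Set.Ico 0 L))
    (harc : ∀ s, dot2 (deriv γ s) (deriv γ s) = 1)
    (t : ℝ) :
    Tendsto (fun s : ℝ => GB_ny_ty_ty γ (γ t) (t + s)) (𝓝[≠] (0 : ℝ))
      (𝓝 (-(curv γ t) / (8 * π))) :=
  stmt1_general γ hγ harc t
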